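/- Let λ1, λ2, λ3 be nonzero real numbers and let g be the 4-dimensional real Lie algebra with basis e1,e2,e3,e4 and only nonzero brackets [e1,e2] = λ3·e3, [e2,e3] = λ1·e1, [e3,e1] = λ2·e2 (so g is su(2) × R or sl(2,R) × R as a vector space direct sum with e4 central), equipped with the Lorentzian inner product making {e_i} orthonormal with ⟨e4,e4⟩ = −1. Then there exists c ∈ R such that Ric − c·Id is a derivation of g if and only if λ1 = λ2 = λ3. -/
import Mathlib


namespace Stmt14

abbrev V : Type := Fin 4 → ℝ

noncomputable def e (i : Fin 4) : V := fun j => if j = i then 1 else 0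

noncomputable def br (l1 l2 l3 : ℝ) (x y : V) : V :=
  let A := x 0 * y 3 - x 3 * y 0
  let B := x 1 * y 3 - x 3 * y 1
  let C := x 2 * y 3 - x 3 * y 2
  let P := x 0 * y 1 - x 1 * y 0
  let Q := x 0 * y 2 - x 2 * y 0
  let R := x 1 * y 2 - x 2 * y 1
  ![l1 * R, -(l2 * Q), l3 * P, 0]

noncomputable def ip (x y : V) : ℝ := x 0 * y 0 + x 1 * y 1 + x 2 * y 2 - x 3 * y 3

noncomputable def Rcurv (l1 l2 l3 : ℝ) (nabla : V → V → V) (z x y : V) : V :=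
  nabla (br l1 l2 l3 z x) y - nabla z (nabla x y) + nabla x (nabla z y)

noncomputable def rho (l1 l2 l3 : ℝ) (nabla : V → V → V) (x y : V) : ℝ :=
  ∑ i : Fin 4, Rcurv l1 l2 l3 nabla (e i) x y i

noncomputable def tau (Ric : V → V) : ℝ := ∑ i : Fin 4, Ric (e i) i

def IsDeriv (l1 l2 l3 : ℝ) (D : V → V) : Prop :=
  ∀ x y : V, D (br l1 l2 l3 x y) = br l1 l2 l3 (D x) y + br l1 l2 l3 x (D y)


set_option maxHeartbeats 1000000 in
theorem nabla_eq (l1 l2 l3 : ℝ) (nabla : V → V → V)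
    (hKoszul : ∀ x y z : V, 2 * ip (nabla x y) z =
      ip (br l1 l2 l3 x y) z - ip (br l1 l2 l3 y z) x + ip (br l1 l2 l3 z x) y) :
    ∀ x y : V, nabla x y =
      ![(l1 - l2 + l3) / 2 * (x 1 * y 2) + (l3 - l1 - l2) / 2 * (x 2 * y 1),
        (l1 - l2 - l3) / 2 * (x 0 * y 2) + (l1 + l2 - l3) / 2 * (x 2 * y 0),
        (-l1 + l2 + l3) / 2 * (x 0 * y 1) + (l2 - l1 - l3) / 2 * (x 1 * y 0),
        0] := by
  intro x y
  have h0 := hKoszul x y (e 0)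
  have h1 := hKoszul x y (e 1)
  have h2 := hKoszul x y (e 2)
  have h3 := hKoszul x y (e 3)
  simp [ip, br, e] at h0 h1 h2 h3
  funext i
  fin_cases i
  · simpa using by linarith [h0]
  · simpa using by linarith [h1]
  · simpa using by linarith [h2]
  · simpa using by linarith [h3]

set_option maxHeartbeats 1000000 in
theorem ric_eq (l1 l2 l3 : ℝ) (nabla : V → V → V)
    (hnab : ∀ x y : V, nabla x y =
      ![(l1 - l2 + l3) / 2 * (x 1 * y 2) + (l3 - l1 - l2) / 2 * (x 2 * y 1),
        (l1 - l2 - l3) / 2 * (x 0 * y 2) + (l1 + l2 - l3) / 2 * (x 2 * y 0),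
        (-l1 + l2 + l3) / 2 * (x 0 * y 1) + (l2 - l1 - l3) / 2 * (x 1 * y 0),
        0])
    (Ric : V → V)
    (hRic : ∀ x y : V, ip (Ric x) y = rho l1 l2 l3 nabla x y) :
    ∀ x : V, Ric x =
      ![((l2 - l3) ^ 2 - l1 ^ 2) / 2 * x 0, ((l1 - l3) ^ 2 - l2 ^ 2) / 2 * x 1,
        ((l1 - l2) ^ 2 - l3 ^ 2) / 2 * x 2, 0] := by
  intro x
  have h0 := hRic x (e 0)
  have h1 := hRic x (e 1)
  have h2 := hRic x (e 2)
  have h3 := hRic x (e 3)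
  simp only [rho, Rcurv, Fin.sum_univ_four, hnab] at h0 h1 h2 h3
  simp [ip, br, e] at h0 h1 h2 h3
  funext i
  fin_cases i
  · simpa using by linear_combination h0
  · simpa using by linear_combination h1
  · simpa using by linear_combination h2
  · simpa using by linear_combination h3

set_option maxHeartbeats 1000000 in
theorem stmt_14 (l1 l2 l3 : ℝ) (hl1 : l1 ≠ 0) (hl2 : l2 ≠ 0) (hl3 : l3 ≠ 0)
    (nabla : V → V → V)
    (hKoszul : ∀ x y z : V, 2 * ip (nabla x y) z =
      ip (br l1 l2 l3 x y) z - ip (br l1 l2 l3 y z) x + ip (br l1 l2 l3 z x) y)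
    (Ric : V → V)
    (hRic : ∀ x y : V, ip (Ric x) y = rho l1 l2 l3 nabla x y) :
    (∃ c : ℝ, IsDeriv l1 l2 l3 (fun v => Ric v - c • v)) ↔ (l1 = l2 ∧ l2 = l3) := by
  have hnab := nabla_eq l1 l2 l3 nabla hKoszul
  have hRicE := ric_eq l1 l2 l3 nabla hnab Ric hRic
  constructor
  · rintro ⟨c, h⟩
    have h01 := congrFun (h (e 0) (e 1)) 2
    have h12 := congrFun (h (e 1) (e 2)) 0
    have h20 := congrFun (h (e 2) (e 0)) 1
    simp only [hRicE, br, e] at h01 h12 h20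
    simp [e, Pi.sub_apply, Pi.smul_apply, smul_eq_mul] at h01 h12 h20
    -- extract the three c equations
    have A : c = ((l2 - l3) ^ 2 - l1 ^ 2) / 2 + ((l1 - l3) ^ 2 - l2 ^ 2) / 2
        - ((l1 - l2) ^ 2 - l3 ^ 2) / 2 :=
      mul_left_cancel₀ hl3 (by linear_combination h01)
    have B : c = ((l1 - l3) ^ 2 - l2 ^ 2) / 2 + ((l1 - l2) ^ 2 - l3 ^ 2) / 2
        - ((l2 - l3) ^ 2 - l1 ^ 2) / 2 :=
      mul_left_cancel₀ hl1 (by linear_combination h12)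
    have C : c = ((l1 - l2) ^ 2 - l3 ^ 2) / 2 + ((l2 - l3) ^ 2 - l1 ^ 2) / 2
        - ((l1 - l3) ^ 2 - l2 ^ 2) / 2 :=
      mul_left_cancel₀ hl2 (by linear_combination h20)
    have F1 : (l3 - l1) * (l1 + l3 - l2) = 0 := by linear_combination (B - A) / 2
    have F2 : (l3 - l2) * (l2 + l3 - l1) = 0 := by linear_combination (C - A) / 2
    rcases mul_eq_zero.mp F1 with h1 | h1
    · rcases mul_eq_zero.mp F2 with h2 | h2
      · constructor <;> linarith
      · exact absurd (by linarith : l2 = 0) hl2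
    · rcases mul_eq_zero.mp F2 with h2 | h2
      · exact absurd (by linarith : l1 = 0) hl1
      · exact absurd (by linarith : l3 = 0) hl3
  · rintro ⟨rfl, rfl⟩
    refine ⟨-(l1 ^ 2) / 2, ?_⟩
    intro x y
    funext i
    simp only [hRicE, br, Pi.sub_apply, Pi.smul_apply, smul_eq_mul]
    fin_cases i <;> simp <;> ring

end Stmt14
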